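/- Tangent-space residual bound: if φ : D → ℝ^q is C² with second derivative bounded by M and Jacobian J at z₀ with J'J = I, then for points z_j with ‖z_j − z₀‖ ≤ r and x_j = φ(z_j), setting x̄ = (1/k)∑ x_j, one has ∑_{j=1}^k (‖x_j − x̄‖² − ‖J'(x_j − x̄)‖²) ≤ C·k·r⁴ for a constant C depending only on M. -/

import Mathlib

open scoped RealInnerProductSpace

/-! Write `J = Dφ(z₀)` and `eⱼ = φ(zⱼ) − φ(z₀) − J(zⱼ − z₀)`, so that `‖eⱼ‖ ≤ M r²` by the mean value
inequality applied twice. Since `J` is an isometry, `‖u − Jw‖² = ‖u‖² − ‖J'u‖² + ‖J'u − w‖²` for all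
`u, w`. Taking `u = xⱼ − x̄` and `w = zⱼ − z̄`, the affine part of `φ` cancels from `u − Jw`, which
becomes `eⱼ − ē`; so each term of the sum is at most `‖eⱼ − ē‖² ≤ (2 M r²)²`. -/

lemma norm_sq_sub_norm_adjoint_apply_sq_le {E F : Type*} [NormedAddCommGroup E]
    [InnerProductSpace ℝ E] [CompleteSpace E] [NormedAddCommGroup F] [InnerProductSpace ℝ F]
    [CompleteSpace F] (J : E →L[ℝ] F) (hJ : ∀ v, ‖J v‖ = ‖v‖) (u : F) (w : E) :
    ‖u‖ ^ 2 - ‖J.adjoint u‖ ^ 2 ≤ ‖u - J w‖ ^ 2 := by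
  have hu : ‖u - J w‖ ^ 2 = ‖u‖ ^ 2 - 2 * ⟪u, J w⟫ + ‖J w‖ ^ 2 := norm_sub_sq_real u (J w)
  have hw : ‖J.adjoint u - w‖ ^ 2 = ‖J.adjoint u‖ ^ 2 - 2 * ⟪J.adjoint u, w⟫ + ‖w‖ ^ 2 :=
    norm_sub_sq_real _ _
  rw [ContinuousLinearMap.adjoint_inner_left, ← hJ w] at hw
  nlinarith [sq_nonneg ‖J.adjoint u - w‖]

lemma Convex.norm_sub_sub_fderiv_le_of_norm_iteratedFDeriv_two_le {E F : Type*}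
    [NormedAddCommGroup E] [NormedSpace ℝ E] [NormedAddCommGroup F] [NormedSpace ℝ F] {D : Set E}
    (hD : Convex ℝ D) {f : E → F} (hf : ContDiff ℝ 2 f) {M : ℝ}
    (hM : ∀ x ∈ D, ‖iteratedFDeriv ℝ 2 f x‖ ≤ M) {x y : E} (hx : x ∈ D) (hy : y ∈ D) :
    ‖f y - f x - fderiv ℝ f x (y - x)‖ ≤ M * ‖y - x‖ ^ 2 := by
  have hM₀ : 0 ≤ M := (norm_nonneg _).trans (hM x hx)
  have hf'' : ∀ w ∈ D, ‖fderiv ℝ (fderiv ℝ f) w‖ ≤ M := fun w hw =>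
    ((norm_iteratedFDeriv_one _).symm.trans norm_iteratedFDeriv_fderiv).trans_le (hM w hw)
  have hseg : ∀ w ∈ segment ℝ x y, ‖fderiv ℝ f w - fderiv ℝ f x‖ ≤ M * ‖y - x‖ := fun w hw =>
    calc ‖fderiv ℝ f w - fderiv ℝ f x‖ ≤ M * ‖w - x‖ :=
          hD.norm_image_sub_le_of_norm_fderiv_le
            (fun v _ => ((hf.fderiv_right le_rfl).differentiable one_ne_zero).differentiableAt)
            hf'' hx (hD.segment_subset hx hy hw)
      _ ≤ M * ‖y - x‖ := by gcongr; exact norm_sub_le_of_mem_segment hw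
  calc ‖f y - f x - fderiv ℝ f x (y - x)‖ ≤ M * ‖y - x‖ * ‖y - x‖ :=
        (convex_segment x y).norm_image_sub_le_of_norm_fderiv_le'
          (fun v _ => (hf.differentiable two_ne_zero).differentiableAt) hseg
          (left_mem_segment ℝ x y) (right_mem_segment ℝ x y)
    _ = M * ‖y - x‖ ^ 2 := by ring

lemma sub_mean_sub_map_sub_mean {E F L : Type*} [AddCommGroup E] [Module ℝ E] [AddCommGroup F]
    [Module ℝ F] [FunLike L E F] [LinearMapClass L ℝ E F] {k : ℕ} (J : L) (x : Fin k → F)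
    (z : Fin k → E) (x₀ : F) (z₀ : E) (j : Fin k) :
    x j - (k : ℝ)⁻¹ • ∑ i, x i - J (z j - (k : ℝ)⁻¹ • ∑ i, z i) =
      (x j - x₀ - J (z j - z₀)) - (k : ℝ)⁻¹ • ∑ i, (x i - x₀ - J (z i - z₀)) := by
  have hk : (k : ℝ) ≠ 0 := Nat.cast_ne_zero.mpr (Fin.pos j).ne'
  have hconst : ∀ c : F, (k : ℝ)⁻¹ • ∑ _i : Fin k, c = c := fun c => by
    rw [Finset.sum_const, Finset.card_univ, Fintype.card_fin, ← Nat.cast_smul_eq_nsmul ℝ,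
      inv_smul_smul₀ hk]
  simp only [map_sub, map_smul, map_sum, Finset.sum_sub_distrib, smul_sub, hconst]
  abel

lemma norm_sub_mean_le {F : Type*} [SeminormedAddCommGroup F] [NormedSpace ℝ F] {k : ℕ}
    {e : Fin k → F} {B : ℝ} (he : ∀ i, ‖e i‖ ≤ B) (j : Fin k) :
    ‖e j - (k : ℝ)⁻¹ • ∑ i, e i‖ ≤ 2 * B := by
  have hk : (0 : ℝ) < k := Nat.cast_pos.mpr (Fin.pos j)
  have hmean : ‖(k : ℝ)⁻¹ • ∑ i, e i‖ ≤ B := by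
    rw [norm_smul, norm_inv, Real.norm_natCast, inv_mul_le_iff₀ hk]
    simpa using norm_sum_le_of_le Finset.univ fun i _ => he i
  linarith [norm_sub_le (e j) ((k : ℝ)⁻¹ • ∑ i, e i), he j]

theorem tangent_space_residual_bound_general (M : ℝ) :
    ∃ C : ℝ, ∀ (d q k : ℕ), 0 < k →
      ∀ (D : Set (EuclideanSpace ℝ (Fin d))), Convex ℝ D →
      ∀ (φ : EuclideanSpace ℝ (Fin d) → EuclideanSpace ℝ (Fin q)),
      ContDiff ℝ 2 φ →
      (∀ z ∈ D, ‖iteratedFDeriv ℝ 2 φ z‖ ≤ M) →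
      ∀ z₀ : EuclideanSpace ℝ (Fin d), z₀ ∈ D →
      (∀ v, ‖fderiv ℝ φ z₀ v‖ = ‖v‖) →
      ∀ z : Fin k → EuclideanSpace ℝ (Fin d), (∀ j, z j ∈ D) →
      ∀ r : ℝ, 0 ≤ r → (∀ j, ‖z j - z₀‖ ≤ r) →
      ∀ xbar : EuclideanSpace ℝ (Fin q), xbar = (k : ℝ)⁻¹ • ∑ j, φ (z j) →
      ∑ j, (‖φ (z j) - xbar‖ ^ 2 -
          ‖(ContinuousLinearMap.adjoint (fderiv ℝ φ z₀)) (φ (z j) - xbar)‖ ^ 2) ≤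
        C * k * r ^ 4 := by
  refine ⟨4 * M ^ 2, fun d q k _ D hD φ hφ hφ₂ z₀ hz₀ hJ z hz r _ hzr xbar hxbar => ?_⟩
  set J := fderiv ℝ φ z₀
  have hM : 0 ≤ M := (norm_nonneg _).trans (hφ₂ z₀ hz₀)
  have he : ∀ j, ‖φ (z j) - φ z₀ - J (z j - z₀)‖ ≤ M * r ^ 2 := fun j =>
    (hD.norm_sub_sub_fderiv_le_of_norm_iteratedFDeriv_two_le hφ hφ₂ hz₀ (hz j)).trans
      (by gcongr; exact hzr j)
  have hterm : ∀ j, ‖φ (z j) - xbar‖ ^ 2 - ‖J.adjoint (φ (z j) - xbar)‖ ^ 2 ≤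
      (2 * (M * r ^ 2)) ^ 2 := fun j => calc
    _ ≤ ‖φ (z j) - xbar - J (z j - (k : ℝ)⁻¹ • ∑ i, z i)‖ ^ 2 :=
      norm_sq_sub_norm_adjoint_apply_sq_le J hJ _ _
    _ = ‖(φ (z j) - φ z₀ - J (z j - z₀)) -
          (k : ℝ)⁻¹ • ∑ i, (φ (z i) - φ z₀ - J (z i - z₀))‖ ^ 2 := by
      rw [hxbar, sub_mean_sub_map_sub_mean J (fun i => φ (z i)) z (φ z₀) z₀ j]
    _ ≤ (2 * (M * r ^ 2)) ^ 2 := by gcongr; exact norm_sub_mean_le he j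
  calc _ ≤ ∑ _j : Fin k, (2 * (M * r ^ 2)) ^ 2 := Finset.sum_le_sum fun j _ => hterm j
    _ = 4 * M ^ 2 * k * r ^ 4 := by simp only [Finset.sum_const, Finset.card_univ,
        Fintype.card_fin, nsmul_eq_mul]; ring

/-- Tangent-space residual bound: if `φ` is C² with second
derivative bounded by `M` and isometric Jacobian `J` at `z₀`, then
`∑ⱼ (‖xⱼ−x̄‖² − ‖J'(xⱼ−x̄)‖²) ≤ C·k·r⁴` with `C` depending only on `M`. -/
theorem tangent_space_residual_bound (M : ℝ) (hM : 0 ≤ M) :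
    ∃ C : ℝ, ∀ (d q k : ℕ), 0 < k →
      ∀ (D : Set (EuclideanSpace ℝ (Fin d))), Convex ℝ D →
      ∀ (φ : EuclideanSpace ℝ (Fin d) → EuclideanSpace ℝ (Fin q)),
      ContDiff ℝ 2 φ →
      (∀ z ∈ D, ‖iteratedFDeriv ℝ 2 φ z‖ ≤ M) →
      ∀ z₀ : EuclideanSpace ℝ (Fin d), z₀ ∈ D →
      (∀ v, ‖fderiv ℝ φ z₀ v‖ = ‖v‖) →
      ∀ z : Fin k → EuclideanSpace ℝ (Fin d), (∀ j, z j ∈ D) →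
      ∀ r : ℝ, 0 ≤ r → (∀ j, ‖z j - z₀‖ ≤ r) →
      ∀ xbar : EuclideanSpace ℝ (Fin q), xbar = (k : ℝ)⁻¹ • ∑ j, φ (z j) →
      ∑ j, (‖φ (z j) - xbar‖ ^ 2 -
          ‖(ContinuousLinearMap.adjoint (fderiv ℝ φ z₀)) (φ (z j) - xbar)‖ ^ 2) ≤
        C * k * r ^ 4 :=
  tangent_space_residual_bound_general M
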